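/- Let G be a finite simple connected graph with n vertices and let 0 < p ≤ 1. Then ‖M_G‖_p = (1 + (n-1)/n^p)^{1/p} if and only if G is the complete graph K_n (i.e., every two distinct vertices of G are adjacent). -/

import Mathlib

open scoped Classical
open Finset

noncomputable section

variable {V : Type*} [Fintype V]

/-- metric ball of radius `r` centered at `v` in the graph `G` -/
def gBall (G : SimpleGraph V) (v : V) (r : ℕ) : Finset V :=
  Finset.univ.filter fun w => G.dist v w ≤ r

/-- Hardy–Littlewood maximal operator on the graph `G` -/
def maxOp (G : SimpleGraph V) (f : V → ℝ) (v : V) : ℝ :=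
  ⨆ k : Fin (Fintype.card V), (∑ w ∈ gBall G v k.1, |f w|) / ((gBall G v k.1).card : ℝ)

/-- ℓ^p (quasi)norm of a function on the vertices -/
def pNorm (p : ℝ) (f : V → ℝ) : ℝ := (∑ v, |f v| ^ p) ^ (1 / p)

/-- operator (quasi)norm of the maximal operator of `G` on ℓ^p -/
def opNorm (G : SimpleGraph V) (p : ℝ) : ℝ :=
  ⨆ f : {f : V → ℝ // f ≠ 0}, pNorm p (maxOp G f.1) / pNorm p f.1

/-- weak ℓ^p norm -/
def wNorm (p : ℝ) (f : V → ℝ) : ℝ :=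
  ⨆ t : {t : ℝ // 0 < t},
    t.1 * ((Finset.univ.filter fun v => t.1 < |f v|).card : ℝ) ^ (1 / p)

/-- weak-type operator norm of the maximal operator of `G` -/
def wOpNorm (G : SimpleGraph V) (p : ℝ) : ℝ :=
  ⨆ f : {f : V → ℝ // f ≠ 0}, wNorm p (maxOp G f.1) / pNorm p f.1

/-- maximal operator over all graphs on `V` isomorphic to `G` -/
def maxOpIso (G : SimpleGraph V) (f : V → ℝ) (j : V) : ℝ :=
  ⨆ H : {H : SimpleGraph V // Nonempty (H ≃g G)}, maxOp H.1 f j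

/-- operator norm of `maxOpIso` on ℓ^p -/
def opNormIso (G : SimpleGraph V) (p : ℝ) : ℝ :=
  ⨆ f : {f : V → ℝ // f ≠ 0}, pNorm p (maxOpIso G f.1) / pNorm p f.1

/-- Kronecker delta at `k` -/
def kdelta (k : V) : V → ℝ := fun j => if j = k then 1 else 0

/-- star graph on `Fin n` with center `0` -/
def starGraph (n : ℕ) : SimpleGraph (Fin n) :=
  SimpleGraph.fromRel fun i _ => i.1 = 0

/-- diameter of a graph -/
def gDiam (G : SimpleGraph V) : ℕ :=
  Finset.univ.sup fun p : V × V => G.dist p.1 p.2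

/-- dilation index of a graph -/
def dilIndex (G : SimpleGraph V) : ℝ :=
  ⨆ x : V, ⨆ r : {r : ℕ // r ≤ gDiam G},
    ((gBall G x (3 * r.1)).card : ℝ) / ((gBall G x r.1).card : ℝ)

/-- overlapping index of a graph -/
def overlapIndex (G : SimpleGraph V) : ℕ :=
  sInf { r : ℕ | ∀ J : Finset (V × ℕ), ∃ I ⊆ J,
    J.biUnion (fun j => gBall G j.1 j.2) = I.biUnion (fun i => gBall G i.1 i.2) ∧
    ∀ v : V, (I.filter fun i => v ∈ gBall G i.1 i.2).card ≤ r }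

/-!
Testing `M_G` on a Kronecker delta `δ_u` gives `M_G δ_u (v) = 1 / |B(v, d(v, u))|`, hence
`‖M_G δ_u‖_p^p = 1 + ∑_{v ≠ u} |B(v, d(v, u))|^{-p} ≥ 1 + (n - 1) / n^p`, with equality only if
every ball `B(v, d(v, u))` with `v ≠ u` is the whole vertex set. If the operator norm equals the
lower bound, this applies to a neighbour `u` of any vertex `v`, so `B(v, 1) = V` and `G = K_n`.
Conversely, on `K_n` every average over a ball is either `|f v|` or the global mean `A` of `|f|`,
and subadditivity of `t ↦ t^p` for `p ≤ 1` gives `A^p ≤ ‖f‖_p^p / n^p`, so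
`‖M f‖_p^p ≤ ‖f‖_p^p + (n - 1) A^p ≤ (1 + (n - 1) / n^p) ‖f‖_p^p`.
-/

theorem Real.rpow_sum_le_sum_rpow {ι : Type*} {p : ℝ} (hp0 : 0 < p) (hp1 : p ≤ 1)
    (s : Finset ι) {g : ι → ℝ} (hg : ∀ i ∈ s, 0 ≤ g i) :
    (∑ i ∈ s, g i) ^ p ≤ ∑ i ∈ s, g i ^ p := by
  refine Finset.le_sum_of_subadditive_on_pred (· ^ p) (0 ≤ ·) ?_ ?_ (fun _ _ => add_nonneg) g hg
  · simp [Real.zero_rpow hp0.ne']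
  · intro x y hx hy
    have h := NNReal.rpow_add_le_add_rpow ⟨x, hx⟩ ⟨y, hy⟩ hp0.le hp1
    exact_mod_cast h

theorem Real.sum_rpow_max_le {ι : Type*} [Fintype ι] (p : ℝ) {g : ι → ℝ}
    (hg : ∀ i, 0 ≤ g i) {A : ℝ} (hA : 0 ≤ A) {i₀ : ι} (hi₀ : A ≤ g i₀) :
    ∑ i, max (g i) A ^ p ≤ ∑ i, g i ^ p + ((Fintype.card ι : ℝ) - 1) * A ^ p := by
  have hmax : ∀ i ∈ Finset.univ.erase i₀, max (g i) A ^ p ≤ g i ^ p + A ^ p := fun i _ => by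
    rcases max_cases (g i) A with ⟨h, -⟩ | ⟨h, -⟩ <;> rw [h]
    · exact le_add_of_nonneg_right (Real.rpow_nonneg hA p)
    · exact le_add_of_nonneg_left (Real.rpow_nonneg (hg i) p)
  have hcard : ((Finset.univ.erase i₀).card : ℝ) = (Fintype.card ι : ℝ) - 1 := by
    rw [Finset.card_erase_of_mem (Finset.mem_univ _), Finset.card_univ,
      Nat.cast_sub (Fintype.card_pos_iff.2 ⟨i₀⟩), Nat.cast_one]
  rw [← Finset.add_sum_erase _ _ (Finset.mem_univ i₀), max_eq_left hi₀,
    ← Finset.add_sum_erase _ (fun i => g i ^ p) (Finset.mem_univ i₀), ← hcard]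
  have := Finset.sum_le_sum hmax
  rw [Finset.sum_add_distrib, Finset.sum_const, nsmul_eq_mul] at this
  linarith

variable {G : SimpleGraph V} {p : ℝ}

theorem mem_gBall {v w : V} {r : ℕ} : w ∈ gBall G v r ↔ G.dist v w ≤ r := by
  simp [gBall]

theorem self_mem_gBall (v : V) (r : ℕ) : v ∈ gBall G v r := by
  simp [mem_gBall]

theorem one_le_card_gBall (v : V) (r : ℕ) : (1 : ℝ) ≤ (gBall G v r).card := by
  exact_mod_cast Finset.card_pos.2 ⟨v, self_mem_gBall v r⟩

theorem gBall_mono (v : V) {r s : ℕ} (h : r ≤ s) : gBall G v r ⊆ gBall G v s :=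
  fun _ hw => mem_gBall.2 ((mem_gBall.1 hw).trans h)

theorem gBall_zero (hG : G.Connected) (v : V) : gBall G v 0 = {v} := by
  ext w
  simp only [mem_gBall, Nat.le_zero, hG.dist_eq_zero_iff, Finset.mem_singleton, eq_comm]

theorem gBall_top {v : V} {r : ℕ} (hr : 1 ≤ r) : gBall (⊤ : SimpleGraph V) v r = Finset.univ := by
  refine Finset.eq_univ_of_forall fun w => mem_gBall.2 ?_
  rcases eq_or_ne v w with rfl | h
  · simp
  · rwa [SimpleGraph.dist_top_of_ne h]

theorem SimpleGraph.Connected.dist_lt_card (hG : G.Connected) (v w : V) :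
    G.dist v w < Fintype.card V := by
  obtain ⟨q⟩ := hG.preconnected v w
  exact (SimpleGraph.dist_le q.bypass).trans_lt q.bypass_isPath.length_lt

section MaximalOperator

variable (G) in
theorem avg_le_maxOp (f : V → ℝ) (v : V) (k : Fin (Fintype.card V)) :
    (∑ w ∈ gBall G v k, |f w|) / (gBall G v k).card ≤ maxOp G f v :=
  le_ciSup (f := fun k : Fin (Fintype.card V) =>
    (∑ w ∈ gBall G v k, |f w|) / (gBall G v k).card) (Set.finite_range _).bddAbove k

theorem maxOp_le [Nonempty V] {f : V → ℝ} {v : V} {C : ℝ}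
    (h : ∀ k : Fin (Fintype.card V), (∑ w ∈ gBall G v k, |f w|) / (gBall G v k).card ≤ C) :
    maxOp G f v ≤ C :=
  have : Nonempty (Fin (Fintype.card V)) := ⟨⟨0, Fintype.card_pos⟩⟩
  ciSup_le h

variable (G) in
theorem maxOp_nonneg [Nonempty V] (f : V → ℝ) (v : V) : 0 ≤ maxOp G f v :=
  (div_nonneg (Finset.sum_nonneg fun _ _ => abs_nonneg _) (Nat.cast_nonneg _)).trans
    (avg_le_maxOp G f v ⟨0, Fintype.card_pos⟩)

variable (G) in
theorem maxOp_le_sum_abs [Nonempty V] (f : V → ℝ) (v : V) : maxOp G f v ≤ ∑ w, |f w| :=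
  maxOp_le fun k =>
    (div_le_self (Finset.sum_nonneg fun _ _ => abs_nonneg _) (one_le_card_gBall v k)).trans
      (Finset.sum_le_sum_of_subset_of_nonneg (Finset.subset_univ _) fun _ _ _ => abs_nonneg _)

theorem maxOp_kdelta [Nonempty V] (hG : G.Connected) (u v : V) :
    maxOp G (kdelta u) v = 1 / (gBall G v (G.dist v u)).card := by
  have hsum (k : ℕ) :
      ∑ w ∈ gBall G v k, |kdelta u w| = if G.dist v u ≤ k then 1 else 0 := by
    simp [kdelta, apply_ite, Finset.sum_ite_eq', mem_gBall]
  refine le_antisymm (maxOp_le fun k => ?_) ?_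
  · rw [hsum]
    split_ifs with h
    · gcongr
      · exact zero_lt_one.trans_le (one_le_card_gBall v _)
      · exact gBall_mono v h
    · simp
  · simpa [hsum] using avg_le_maxOp G (kdelta u) v ⟨G.dist v u, hG.dist_lt_card v u⟩

theorem maxOp_top_le_max [Nonempty V] (f : V → ℝ) (v : V) :
    maxOp (⊤ : SimpleGraph V) f v ≤ max |f v| ((∑ w, |f w|) / Fintype.card V) := by
  refine maxOp_le fun k => ?_
  rcases Nat.eq_zero_or_pos k.1 with hk | hk
  · simp [hk, gBall_zero SimpleGraph.connected_top]
  · simp [gBall_top hk]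

end MaximalOperator

section Norms

theorem pNorm_pos {f : V → ℝ} (hf : f ≠ 0) : 0 < pNorm p f := by
  obtain ⟨v, hv⟩ := Function.ne_iff.1 hf
  refine Real.rpow_pos_of_pos (Finset.sum_pos' (fun w _ => Real.rpow_nonneg (abs_nonneg _) _)
    ⟨v, Finset.mem_univ v, Real.rpow_pos_of_pos (abs_pos.2 hv) _⟩) _

omit [Fintype V] in
theorem kdelta_ne_zero (u : V) : kdelta u ≠ 0 :=
  Function.ne_iff.2 ⟨u, by simp [kdelta]⟩

theorem pNorm_kdelta (hp : p ≠ 0) (u : V) : pNorm p (kdelta u) = 1 := by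
  simp [pNorm, kdelta, apply_ite, Real.zero_rpow hp]

end Norms

section OperatorNorm

variable [Nonempty V]

variable (G) in
theorem pNorm_maxOp_le (hp0 : 0 < p) (hp1 : p ≤ 1) (f : V → ℝ) :
    pNorm p (maxOp G f) ≤ (Fintype.card V : ℝ) ^ (1 / p) * pNorm p f := by
  have hpoint (v : V) : |maxOp G f v| ^ p ≤ ∑ w, |f w| ^ p := by
    rw [abs_of_nonneg (maxOp_nonneg G f v)]
    exact (Real.rpow_le_rpow (maxOp_nonneg G f v) (maxOp_le_sum_abs G f v) hp0.le).trans
      (Real.rpow_sum_le_sum_rpow hp0 hp1 _ fun w _ => abs_nonneg (f w))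
  have hsum : ∑ v, |maxOp G f v| ^ p ≤ Fintype.card V * ∑ w, |f w| ^ p := by
    simpa using Finset.sum_le_sum fun v (_ : v ∈ Finset.univ) => hpoint v
  unfold pNorm
  rw [← Real.mul_rpow (Nat.cast_nonneg _)
    (Finset.sum_nonneg fun _ _ => Real.rpow_nonneg (abs_nonneg _) _)]
  exact Real.rpow_le_rpow (Finset.sum_nonneg fun _ _ => Real.rpow_nonneg (abs_nonneg _) _) hsum
    (by positivity)

variable (G) in
theorem le_opNorm (hp0 : 0 < p) (hp1 : p ≤ 1) {f : V → ℝ} (hf : f ≠ 0) :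
    pNorm p (maxOp G f) / pNorm p f ≤ opNorm G p := by
  refine le_ciSup (f := fun f : {f : V → ℝ // f ≠ 0} => pNorm p (maxOp G f.1) / pNorm p f.1)
    ⟨(Fintype.card V : ℝ) ^ (1 / p), ?_⟩ ⟨f, hf⟩
  rintro _ ⟨g, rfl⟩
  exact (div_le_iff₀ (pNorm_pos g.2)).2 (pNorm_maxOp_le G hp0 hp1 g.1)

theorem opNorm_le {C : ℝ} (h : ∀ f : V → ℝ, pNorm p (maxOp G f) ≤ C * pNorm p f) :
    opNorm G p ≤ C :=
  have : Nonempty {f : V → ℝ // f ≠ 0} := ⟨⟨kdelta (Classical.arbitrary V), kdelta_ne_zero _⟩⟩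
  ciSup_le fun f => (div_le_iff₀ (pNorm_pos f.2)).2 (h f.1)

end OperatorNorm

section Delta

variable [Nonempty V]

theorem sum_rpow_maxOp_kdelta (hG : G.Connected) (u : V) :
    ∑ v, |maxOp G (kdelta u) v| ^ p
      = 1 + ∑ v ∈ Finset.univ.erase u, ((gBall G v (G.dist v u)).card : ℝ) ^ (-p) := by
  have hterm (v : V) :
      |maxOp G (kdelta u) v| ^ p = ((gBall G v (G.dist v u)).card : ℝ) ^ (-p) := by
    rw [maxOp_kdelta hG, abs_of_nonneg (by positivity), one_div,
      Real.inv_rpow (Nat.cast_nonneg _), Real.rpow_neg (Nat.cast_nonneg _)]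
  simp only [hterm, ← Finset.add_sum_erase _ _ (Finset.mem_univ u), SimpleGraph.dist_self,
    gBall_zero hG, Finset.card_singleton, Nat.cast_one, Real.one_rpow]

omit [Nonempty V] in
theorem card_rpow_neg_le_card_gBall_rpow_neg (hp : 0 ≤ p) (v : V) (r : ℕ) :
    (Fintype.card V : ℝ) ^ (-p) ≤ ((gBall G v r).card : ℝ) ^ (-p) :=
  Real.rpow_le_rpow_of_nonpos (zero_lt_one.trans_le (one_le_card_gBall v r))
    (by exact_mod_cast Finset.card_le_univ _) (neg_nonpos.2 hp)

omit [Nonempty V] in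
theorem card_rpow_neg_lt_card_gBall_rpow_neg (hp : 0 < p) {v : V} {r : ℕ}
    (h : gBall G v r ≠ Finset.univ) :
    (Fintype.card V : ℝ) ^ (-p) < ((gBall G v r).card : ℝ) ^ (-p) :=
  Real.rpow_lt_rpow_of_neg (zero_lt_one.trans_le (one_le_card_gBall v r))
    (by exact_mod_cast (Finset.card_lt_iff_ne_univ _).2 h) (neg_neg_of_pos hp)

theorem card_sub_one_div_rpow_nonneg (p : ℝ) :
    0 ≤ ((Fintype.card V : ℝ) - 1) / (Fintype.card V : ℝ) ^ p :=
  div_nonneg (sub_nonneg.2 (Nat.one_le_cast.2 Fintype.card_pos)) (by positivity)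

omit [Nonempty V] in
theorem sum_erase_card_rpow_neg (u : V) :
    ∑ _v ∈ Finset.univ.erase u, (Fintype.card V : ℝ) ^ (-p)
      = ((Fintype.card V : ℝ) - 1) / (Fintype.card V : ℝ) ^ p := by
  rw [Finset.sum_const, nsmul_eq_mul, Finset.card_erase_of_mem (Finset.mem_univ u),
    Finset.card_univ, Nat.cast_sub (Fintype.card_pos_iff.2 ⟨u⟩), Nat.cast_one,
    Real.rpow_neg (Nat.cast_nonneg _), div_eq_mul_inv]

theorem le_sum_rpow_maxOp_kdelta (hG : G.Connected) (hp : 0 ≤ p) (u : V) :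
    1 + ((Fintype.card V : ℝ) - 1) / (Fintype.card V : ℝ) ^ p
      ≤ ∑ v, |maxOp G (kdelta u) v| ^ p := by
  rw [sum_rpow_maxOp_kdelta hG, ← sum_erase_card_rpow_neg u]
  exact add_le_add_right
    (Finset.sum_le_sum fun v _ => card_rpow_neg_le_card_gBall_rpow_neg hp v _) 1

theorem lt_sum_rpow_maxOp_kdelta (hG : G.Connected) (hp : 0 < p) {u v : V} (hvu : v ≠ u)
    (h : gBall G v (G.dist v u) ≠ Finset.univ) :
    1 + ((Fintype.card V : ℝ) - 1) / (Fintype.card V : ℝ) ^ p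
      < ∑ w, |maxOp G (kdelta u) w| ^ p := by
  rw [sum_rpow_maxOp_kdelta hG, ← sum_erase_card_rpow_neg u, add_lt_add_iff_left]
  exact Finset.sum_lt_sum (fun w _ => card_rpow_neg_le_card_gBall_rpow_neg hp.le w _)
    ⟨v, Finset.mem_erase.2 ⟨hvu, Finset.mem_univ v⟩, card_rpow_neg_lt_card_gBall_rpow_neg hp h⟩

theorem rpow_le_opNorm (hG : G.Connected) (hp0 : 0 < p) (hp1 : p ≤ 1) :
    (1 + ((Fintype.card V : ℝ) - 1) / (Fintype.card V : ℝ) ^ p) ^ (1 / p) ≤ opNorm G p := by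
  let u := Classical.arbitrary V
  have h := le_opNorm G hp0 hp1 (kdelta_ne_zero u)
  rw [pNorm_kdelta hp0.ne', div_one, pNorm] at h
  have hc := card_sub_one_div_rpow_nonneg (V := V) p
  exact le_trans (Real.rpow_le_rpow (by positivity) (le_sum_rpow_maxOp_kdelta hG hp0.le u)
    (by positivity)) h

theorem gBall_dist_eq_univ_of_opNorm_le (hG : G.Connected) (hp0 : 0 < p) (hp1 : p ≤ 1)
    (h : opNorm G p ≤ (1 + ((Fintype.card V : ℝ) - 1) / (Fintype.card V : ℝ) ^ p) ^ (1 / p))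
    {u v : V} (hvu : v ≠ u) : gBall G v (G.dist v u) = Finset.univ := by
  by_contra hne
  have hc := card_sub_one_div_rpow_nonneg (V := V) p
  have hnorm := (le_opNorm G hp0 hp1 (kdelta_ne_zero u)).trans h
  rw [pNorm_kdelta hp0.ne', div_one, pNorm,
    Real.rpow_le_rpow_iff (by positivity) (by positivity) (by positivity)] at hnorm
  exact (lt_sum_rpow_maxOp_kdelta hG hp0 hvu hne).not_ge hnorm

end Delta

theorem eq_top_of_gBall_dist_eq_univ (hG : G.Connected)
    (h : ∀ u v : V, v ≠ u → gBall G v (G.dist v u) = Finset.univ) : G = ⊤ := by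
  ext v w
  refine ⟨SimpleGraph.Adj.ne, fun hvw => ?_⟩
  obtain ⟨q⟩ := hG.preconnected v w
  have hvx : G.Adj v (q.getVert 1) := q.adj_snd (SimpleGraph.Walk.not_nil_of_ne hvw)
  have hw : w ∈ gBall G v 1 := by
    rw [← SimpleGraph.dist_eq_one_iff_adj.2 hvx, h _ v hvx.ne]
    exact Finset.mem_univ w
  rw [← SimpleGraph.dist_eq_one_iff_adj]
  exact le_antisymm (mem_gBall.1 hw)
    (Nat.one_le_iff_ne_zero.2 fun h0 => hvw (hG.dist_eq_zero_iff.1 h0))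

section CompleteGraph

variable [Nonempty V]

theorem sum_rpow_maxOp_top_le (hp0 : 0 < p) (hp1 : p ≤ 1) (f : V → ℝ) :
    ∑ v, |maxOp (⊤ : SimpleGraph V) f v| ^ p
      ≤ (1 + ((Fintype.card V : ℝ) - 1) / (Fintype.card V : ℝ) ^ p) * ∑ v, |f v| ^ p := by
  set N := (Fintype.card V : ℝ)
  set A := (∑ w, |f w|) / N
  have hN : 0 < N := Nat.cast_pos.2 Fintype.card_pos
  have hA : 0 ≤ A := by positivity
  obtain ⟨v₀, -, hv₀⟩ := Finset.exists_max_image Finset.univ (fun v => |f v|) Finset.univ_nonempty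
  have hAv₀ : A ≤ |f v₀| := by
    rw [div_le_iff₀ hN]
    simpa [N, mul_comm] using Finset.sum_le_sum fun w hw => hv₀ w hw
  have hAp : A ^ p ≤ (∑ w, |f w| ^ p) / N ^ p := by
    rw [Real.div_rpow (by positivity) hN.le]
    gcongr
    exact Real.rpow_sum_le_sum_rpow hp0 hp1 _ fun w _ => abs_nonneg (f w)
  have hN1 : 0 ≤ N - 1 := sub_nonneg.2 (Nat.one_le_cast.2 Fintype.card_pos)
  calc ∑ v, |maxOp ⊤ f v| ^ p ≤ ∑ v, max |f v| A ^ p := by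
        refine Finset.sum_le_sum fun v _ => ?_
        rw [abs_of_nonneg (maxOp_nonneg _ f v)]
        exact Real.rpow_le_rpow (maxOp_nonneg _ f v) (maxOp_top_le_max f v) hp0.le
    _ ≤ ∑ v, |f v| ^ p + (N - 1) * A ^ p :=
        Real.sum_rpow_max_le p (fun v => abs_nonneg (f v)) hA hAv₀
    _ ≤ ∑ v, |f v| ^ p + (N - 1) * ((∑ w, |f w| ^ p) / N ^ p) := by gcongr
    _ = (1 + (N - 1) / N ^ p) * ∑ v, |f v| ^ p := by ring

theorem opNorm_top_le (hp0 : 0 < p) (hp1 : p ≤ 1) :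
    opNorm (⊤ : SimpleGraph V) p
      ≤ (1 + ((Fintype.card V : ℝ) - 1) / (Fintype.card V : ℝ) ^ p) ^ (1 / p) := by
  have hc := card_sub_one_div_rpow_nonneg (V := V) p
  refine opNorm_le fun f => ?_
  rw [pNorm, pNorm, ← Real.mul_rpow (by positivity) (by positivity)]
  exact Real.rpow_le_rpow (by positivity) (sum_rpow_maxOp_top_le hp0 hp1 f) (by positivity)

end CompleteGraph

/-- the lower bound is attained exactly by the complete graph. -/
theorem stmt9 (n : ℕ) (G : SimpleGraph (Fin n)) (hG : G.Connected)
    (p : ℝ) (hp0 : 0 < p) (hp1 : p ≤ 1) :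
    opNorm G p = (1 + ((n : ℝ) - 1) / (n : ℝ) ^ p) ^ (1 / p)
      ↔ G = (⊤ : SimpleGraph (Fin n)) := by
  have : Nonempty (Fin n) := hG.nonempty
  have hcard : (Fintype.card (Fin n) : ℝ) = n := by rw [Fintype.card_fin]
  constructor
  · intro h
    refine eq_top_of_gBall_dist_eq_univ hG fun u v hvu => ?_
    exact gBall_dist_eq_univ_of_opNorm_le hG hp0 hp1 (by rw [hcard]; exact h.le) hvu
  · rintro rfl
    have hlower := rpow_le_opNorm (V := Fin n) SimpleGraph.connected_top hp0 hp1
    have hupper := opNorm_top_le (V := Fin n) hp0 hp1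
    rw [hcard] at hlower hupper
    exact le_antisymm hupper hlower
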